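/- arXiv:math/9907112 — 2 statements merged into one kernel-verified Lean document; each statement's English description precedes it below -/
import Mathlib

section
/- Let X be a nowhere-zero vector field on a Riemannian 3-manifold (M, g) with volume form μ, and let α = ι_X g be the dual 1-form. If X is a rotational Beltrami field, i.e. dα = f ι_X μ with f nowhere zero, then α is a contact form: α ∧ dα is nowhere zero. -/
/-- Model of a 3-manifold: `ℝ³` (a chart). -/
abbrev E3 : Type := EuclideanSpace ℝ (Fin 3)

/-- Exterior derivative of a 1-form. -/
noncomputable def extD1 {F : Type*} [NormedAddCommGroup F] [NormedSpace ℝ F]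
    (ω : F → F → ℝ) (x u v : F) : ℝ :=
  fderiv ℝ (fun y => ω y v) x u - fderiv ℝ (fun y => ω y u) x v

/-- The wedge product `α ∧ β` of a 1-form and a 2-form. -/
def wedge12 {F : Type*} [NormedAddCommGroup F] [NormedSpace ℝ F]
    (α : F → F → ℝ) (β : F → F → F → ℝ) (x u v w : F) : ℝ :=
  α x u * β x v w - α x v * β x u w + α x w * β x u v

/-- Let `X` be a nowhere-zero vector field on a Riemannian 3-manifold `(M, g)`
with volume form `μ` (a nondegenerate 3-form), and let `α = ι_X g = g(X, ·)` be
the dual 1-form.  If `X` is a rotational Beltrami field, i.e.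
`dα = ι_{∇×X} μ = f · ι_X μ` with `f` nowhere zero, then `α` is a contact form:
`α ∧ dα` is nowhere zero. -/
theorem stmt8 (g : E3 → E3 →ₗ[ℝ] E3 →ₗ[ℝ] ℝ)
    (μ : E3 → AlternatingMap ℝ E3 ℝ (Fin 3))
    (X : E3 → E3) (f : E3 → ℝ)
    (hgsymm : ∀ x u v, g x u v = g x v u)
    (hgpos : ∀ x v, v ≠ 0 → 0 < g x v v)
    (hμnd : ∀ (x : E3) (v : E3), v ≠ 0 → ∃ a b, μ x ![v, a, b] ≠ 0)
    (hX : ∀ x, X x ≠ 0)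
    (hXsmooth : ContDiff ℝ (⊤ : ℕ∞) X)
    (hgsmooth : ContDiff ℝ (⊤ : ℕ∞) fun p : E3 × E3 × E3 => g p.1 p.2.1 p.2.2)
    (hf : ∀ x, f x ≠ 0)
    -- rotational Beltrami: `dα = f · ι_X μ`
    (hBeltrami : ∀ x u v,
      extD1 (fun y w => g y (X y) w) x u v = f x * μ x ![X x, u, v]) :
    ∀ x : E3, ∃ u v w,
      wedge12 (fun y a => g y (X y) a)
        (extD1 fun y a => g y (X y) a) x u v w ≠ 0 := by
  intro x
  obtain ⟨a, b, hab⟩ := hμnd x (X x) (hX x)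
  refine ⟨X x, a, b, ?_⟩
  have hz : ∀ w, μ x ![X x, X x, w] = 0 := fun w =>
    (μ x).map_eq_zero_of_eq ![X x, X x, w] (by simp) (by simp : (0 : Fin 3) ≠ 1)
  simp only [wedge12, hBeltrami, hz, mul_zero, sub_zero, add_zero]
  exact mul_ne_zero (ne_of_gt (hgpos x (X x) (hX x))) (mul_ne_zero (hf x) hab)
end

section
/- Let X be a nowhere-zero rotational Beltrami field on (M, g, μ) with dual contact form α = ι_X g. Then ι_X dα = 0, and hence X = h X_α for a nowhere-zero function h, where X_α is the Reeb field of α; i.e., every rotational Beltrami field is a nonzero rescaling of a Reeb field. -/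
/-- Key linear algebra fact: if a nonzero alternating 3-form kills `![v, w, u]`
for every `u`, and `v ≠ 0`, then `w` is a multiple of `v`. -/
lemma key_parallel (m : AlternatingMap ℝ E3 ℝ (Fin 3)) (v w : E3) (hv : v ≠ 0)
    (h0 : ∀ u, m ![v, w, u] = 0) (hnz : ∃ a b, m ![v, a, b] ≠ 0) :
    ∃ c : ℝ, w = c • v := by
  by_contra hc
  push_neg at hc
  have hli : LinearIndependent ℝ ![v, w] := by
    rw [LinearIndependent.pair_iff' hv]
    intro a ha
    exact hc a ha.symm
  have hdim : (2 : ℕ) < Module.finrank ℝ E3 := by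
    simp [finrank_euclideanSpace_fin]
  obtain ⟨u, hu⟩ := exists_linearIndependent_snoc_of_lt_finrank hli hdim
  have hsnoc : Fin.snoc ![v, w] u = ![v, w, u] := by
    funext i
    fin_cases i <;> simp [Fin.snoc] <;> rfl
  rw [hsnoc] at hu
  have hcard : Fintype.card (Fin 3) = Module.finrank ℝ E3 := by
    simp [finrank_euclideanSpace_fin]
  let B := basisOfLinearIndependentOfCardEqFinrank hu hcard
  have hB : ⇑B = ![v, w, u] := coe_basisOfLinearIndependentOfCardEqFinrank hu hcard
  have hmB : m ⇑B = 0 := by rw [hB]; exact h0 u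
  have : m = 0 := by
    rw [m.eq_smul_basis_det B, hmB, zero_smul]
  obtain ⟨a, b, hab⟩ := hnz
  exact hab (by rw [this]; rfl)

/-- Let `X` be a nowhere-zero rotational Beltrami field on `(M, g, μ)`
(`dα = f · ι_X μ` with `f` nowhere zero) with dual contact form
`α = ι_X g = g(X, ·)`.  Then `ι_X dα = 0`, and hence for any Reeb field `Rb`
of `α` (`α(Rb) = 1`, `ι_{Rb} dα = 0`) one has `X = h · Rb` for a nowhere-zero
function `h`: every rotational Beltrami field is a nonzero rescaling of a Reeb
field. -/
theorem stmt9 (g : E3 → E3 →ₗ[ℝ] E3 →ₗ[ℝ] ℝ)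
    (μ : E3 → AlternatingMap ℝ E3 ℝ (Fin 3))
    (X : E3 → E3) (f : E3 → ℝ)
    (hgsymm : ∀ x u v, g x u v = g x v u)
    (hgpos : ∀ x v, v ≠ 0 → 0 < g x v v)
    (hμnd : ∀ (x : E3) (v : E3), v ≠ 0 → ∃ a b, μ x ![v, a, b] ≠ 0)
    (hX : ∀ x, X x ≠ 0)
    (hf : ∀ x, f x ≠ 0)
    (hBeltrami : ∀ x u v,
      extD1 (fun y w => g y (X y) w) x u v = f x * μ x ![X x, u, v]) :
    (∀ x v, extD1 (fun y w => g y (X y) w) x (X x) v = 0) ∧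
      ∀ Rb : E3 → E3,
        (∀ x, g x (X x) (Rb x) = 1) →
        (∀ x v, extD1 (fun y w => g y (X y) w) x (Rb x) v = 0) →
        ∃ h : E3 → ℝ, (∀ x, h x ≠ 0) ∧ ∀ x, X x = h x • Rb x := by
  constructor
  · intro x v
    rw [hBeltrami]
    have : μ x ![X x, X x, v] = 0 :=
      (μ x).map_eq_zero_of_eq _ (i := 0) (j := 1) rfl (by simp)
    rw [this, mul_zero]
  · intro Rb hReeb hRbker
    refine ⟨fun x => g x (X x) (X x), fun x => (hgpos x (X x) (hX x)).ne', ?_⟩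
    intro x
    have hμ0 : ∀ u, μ x ![X x, Rb x, u] = 0 := by
      intro u
      have := hRbker x u
      rw [hBeltrami] at this
      exact (mul_eq_zero.mp this).resolve_left (hf x)
    obtain ⟨c, hcw⟩ := key_parallel (μ x) (X x) (Rb x) (hX x) hμ0 (hμnd x (X x) (hX x))
    have h1 : c * g x (X x) (X x) = 1 := by
      have := hReeb x
      rw [hcw] at this
      simpa [mul_comm] using this
    rw [hcw, smul_smul]
    have hg0 : g x (X x) (X x) ≠ 0 := (hgpos x (X x) (hX x)).ne'
    rw [show g x (X x) (X x) * c = 1 by rw [mul_comm]; exact h1, one_smul]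
end
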